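/- arXiv:2001.09633 — 5 statements merged into one kernel-verified Lean document; each statement's English description precedes it below -/
import Mathlib

section
/- Let G be a graph with maximum degree Δ, k a positive integer, S a minimum K_k-isolating set of G, and v_1,...,v_ℓ a sequence in S chosen greedily: v_1 has minimum degree in G[S], and recursively v_{i+1} has minimum degree in G[S \ N_S[{v_1,...,v_i}]], continuing until S = ∪_{i=1}^ℓ N_S[v_i]. Then ι'_k(G) ≤ −ι_k(G)²/ℓ + ι_k(G)(Δ + 2) − ℓΔ. -/
open SimpleGraph

variable {V : Type*}

/-- The closed neighborhood `N[S]` of a set of vertices. -/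
def closedNbhd (G : SimpleGraph V) (S : Set V) : Set V :=
  {v | v ∈ S ∨ ∃ u ∈ S, G.Adj u v}

/-- The open neighborhood `N(S)` of a set of vertices. -/
def openNbhd (G : SimpleGraph V) (S : Set V) : Set V :=
  {v | ∃ u ∈ S, G.Adj u v}

/-- A set is independent if no two of its vertices are adjacent. -/
def IsIndep (G : SimpleGraph V) (S : Set V) : Prop :=
  S.Pairwise fun u w => ¬ G.Adj u w

/-- `S` is `K_k`-isolating: `G - N[S]` contains no clique of size `k`. -/
def IsIsolating (G : SimpleGraph V) (k : ℕ) (S : Set V) : Prop :=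
  ∀ T : Finset V, (↑T : Set V) ∩ closedNbhd G S = ∅ → G.IsClique ↑T → T.card ≠ k

/-- The `K_k`-isolation number `ι_k(G)`. -/
noncomputable def iota [Fintype V] (G : SimpleGraph V) (k : ℕ) : ℕ :=
  sInf {n | ∃ S : Finset V, S.card = n ∧ IsIsolating G k ↑S}

/-- The independent `K_k`-isolation number `ι'_k(G)`. -/
noncomputable def iota' [Fintype V] (G : SimpleGraph V) (k : ℕ) : ℕ :=
  sInf {n | ∃ S : Finset V, S.card = n ∧ IsIsolating G k ↑S ∧ IsIndep G ↑S}

/-- A dominating set: every vertex lies in `N[S]`. -/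
def IsDominating (G : SimpleGraph V) (S : Set V) : Prop :=
  ∀ v, v ∈ closedNbhd G S

/-- The domination number `γ(G)`. -/
noncomputable def gammaNum [Fintype V] (G : SimpleGraph V) : ℕ :=
  sInf {n | ∃ S : Finset V, S.card = n ∧ IsDominating G ↑S}

/-- The independent domination number `i(G)`. -/
noncomputable def iNum [Fintype V] (G : SimpleGraph V) : ℕ :=
  sInf {n | ∃ S : Finset V, S.card = n ∧ IsDominating G ↑S ∧ IsIndep G ↑S}

/-- `G` is `K_{1,r}`-free: no induced subgraph isomorphic to the star `K_{1,r}`. -/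
def K1rFree (G : SimpleGraph V) (r : ℕ) : Prop :=
  IsEmpty (completeBipartiteGraph (Fin 1) (Fin r) ↪g G)

/-- Degree of `v` inside the vertex subset `T`. -/
def degIn [DecidableEq V] (G : SimpleGraph V) [DecidableRel G.Adj] (T : Finset V) (v : V) : ℕ :=
  (T.filter (G.Adj v)).card

/-!
Peel `S` into the blocks `Bᵢ = N_{S_{i-1}}[vᵢ]` of sizes `dᵢ + 1`, so `ι_k = ℓ + ∑ dᵢ`. A vertex of
`Bᵢ` other than `vᵢ` has at least `dᵢ` neighbours in `S`, which lies inside `N[{v₁, …, v_ℓ}]`, hence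
at most `Δ - dᵢ` neighbours outside it. The centres `vᵢ` are pairwise non-adjacent, so together with
a maximal independent subset of `N(S) \ N[{v₁, …, v_ℓ}]` they form an independent set dominating
`N[S]`, which is therefore `K_k`-isolating and has at most `ℓ + ∑ dᵢ (Δ - dᵢ)` vertices.
Cauchy–Schwarz turns this into the stated bound.
-/

open Finset

/-- `N_T[x]`, the closed neighbourhood of `x` inside the vertex set `T`. -/
def closedNbhdIn [DecidableEq V] (G : SimpleGraph V) [DecidableRel G.Adj] (T : Finset V) (x : V) :
    Finset V :=
  T.filter fun u => u = x ∨ G.Adj x u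

def closedNbhdFinset [Fintype V] [DecidableEq V] (G : SimpleGraph V) [DecidableRel G.Adj]
    (A : Finset V) : Finset V :=
  univ.filter fun w => w ∈ A ∨ ∃ u ∈ A, G.Adj u w

section Basic

variable (G : SimpleGraph V)

theorem closedNbhd_mono {A B : Set V} (h : A ⊆ B) : closedNbhd G A ⊆ closedNbhd G B := by
  rintro w (hw | ⟨u, hu, huw⟩)
  · exact Or.inl (h hw)
  · exact Or.inr ⟨u, h hu, huw⟩

theorem IsIsolating.of_closedNbhd_subset {k : ℕ} {S I : Set V} (hS : IsIsolating G k S)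
    (hSI : closedNbhd G S ⊆ closedNbhd G I) : IsIsolating G k I := fun T hT hT' =>
  hS T (Set.subset_empty_iff.1 (hT ▸ Set.inter_subset_inter_right _ hSI)) hT'

theorem isIndep_union {A B : Set V} (hA : IsIndep G A) (hB : IsIndep G B)
    (hAB : ∀ a ∈ A, ∀ b ∈ B, ¬ G.Adj a b) : IsIndep G (A ∪ B) := by
  have : Std.Symm fun u w : V => ¬ G.Adj u w := ⟨fun _ _ h h' => h h'.symm⟩
  exact Set.pairwise_union_of_symm.2 ⟨hA, hB, fun a ha b hb _ => hAB a ha b hb⟩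

theorem iota'_le_card [Fintype V] {k : ℕ} {I : Finset V} (hI : IsIsolating G k ↑I)
    (hI' : IsIndep G ↑I) : iota' G k ≤ #I :=
  Nat.sInf_le ⟨I, rfl, hI, hI'⟩

theorem exists_isIndep_subset_dominating (U : Finset V) :
    ∃ M ⊆ U, IsIndep G ↑M ∧ ∀ w ∈ U, w ∈ M ∨ ∃ m ∈ M, G.Adj m w := by
  classical
  obtain ⟨M, hM, hmax⟩ := (U.powerset.filter fun M : Finset V => IsIndep G ↑M).exists_max_image
    card ⟨∅, mem_filter.2 ⟨empty_mem_powerset U, by simp [IsIndep]⟩⟩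
  rw [mem_filter, mem_powerset] at hM
  refine ⟨M, hM.1, hM.2, fun w hw => ?_⟩
  by_contra! h
  have hind : IsIndep G ↑(insert w M) := by
    rw [coe_insert, Set.insert_eq]
    exact isIndep_union G (Set.pairwise_singleton _ _) hM.2
      fun a ha m hm hadj => h.2 m hm (ha ▸ hadj.symm)
  have := hmax (insert w M) (mem_filter.2 ⟨mem_powerset.2 (insert_subset hw hM.1), hind⟩)
  rw [card_insert_of_notMem h.1] at this
  omega

end Basic

/-- After substituting `n = #s + ∑ dᵢ`, this is Cauchy–Schwarz: `(∑ dᵢ)² ≤ #s * ∑ dᵢ²`. -/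
theorem card_add_sum_mul_sub_le {ι : Type*} (s : Finset ι) (d : ι → ℝ) (Δ : ℝ) :
    #s + ∑ i ∈ s, d i * (Δ - d i) ≤
      -(#s + ∑ i ∈ s, d i) ^ 2 / #s + (#s + ∑ i ∈ s, d i) * (Δ + 2) - #s * Δ := by
  rcases s.eq_empty_or_nonempty with rfl | hs
  · simp
  have hpos : (0 : ℝ) < #s := by exact_mod_cast hs.card_pos
  have hCS := sq_sum_le_card_mul_sum_sq (s := s) (f := d)
  have hexp : ∑ i ∈ s, d i * (Δ - d i) = Δ * ∑ i ∈ s, d i - ∑ i ∈ s, d i ^ 2 := by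
    rw [mul_sum, ← sum_sub_distrib]
    exact sum_congr rfl fun i _ => by ring
  have hsq : -(#s + ∑ i ∈ s, d i) ^ 2 / #s
      = -(#s : ℝ) - 2 * ∑ i ∈ s, d i - (∑ i ∈ s, d i) ^ 2 / #s := by
    field_simp
    ring
  rw [hexp, hsq]
  have : (∑ i ∈ s, d i) ^ 2 / #s ≤ ∑ i ∈ s, d i ^ 2 := by
    rw [div_le_iff₀ hpos]
    linarith
  linarith

section SdiffChain

variable {α : Type*} [DecidableEq α] {s B : ℕ → Finset α} {ℓ : ℕ}

theorem subset_of_sdiff_chain (hs : ∀ i < ℓ, s (i + 1) = s i \ B i) {i j : ℕ} (hij : i ≤ j)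
    (hj : j ≤ ℓ) : s j ⊆ s i := by
  induction j, hij using Nat.le_induction with
  | base => exact Subset.rfl
  | succ j _ ih =>
    rw [hs j (by omega)]
    exact sdiff_subset.trans (ih (by omega))

theorem card_eq_sum_card_add_of_sdiff_chain (hB : ∀ i < ℓ, B i ⊆ s i)
    (hs : ∀ i < ℓ, s (i + 1) = s i \ B i) :
    #(s 0) = ∑ i ∈ range ℓ, #(B i) + #(s ℓ) := by
  induction ℓ with
  | zero => simp
  | succ n ih =>
    rw [ih (fun i hi => hB i (by omega)) (fun i hi => hs i (by omega)), sum_range_succ,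
      hs n (by omega), card_sdiff_of_subset (hB n (by omega))]
    have := card_le_card (hB n (by omega))
    omega

theorem subset_biUnion_union_of_sdiff_chain (hs : ∀ i < ℓ, s (i + 1) = s i \ B i) :
    s 0 ⊆ (range ℓ).biUnion B ∪ s ℓ := by
  induction ℓ with
  | zero => simp
  | succ n ih =>
    refine (ih fun i hi => hs i (by omega)).trans fun x hx => ?_
    rw [range_add_one, biUnion_insert, hs n (by omega)]
    simp only [mem_union, mem_biUnion, mem_sdiff] at hx ⊢
    rcases hx with hx | hx
    · exact Or.inl (Or.inr hx)
    · by_cases hxB : x ∈ B n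
      · exact Or.inl (Or.inl hxB)
      · exact Or.inr ⟨hx, hxB⟩

end SdiffChain

section DegIn

variable [DecidableEq V] (G : SimpleGraph V) [DecidableRel G.Adj]

theorem mem_closedNbhdIn {T : Finset V} {x u : V} :
    u ∈ closedNbhdIn G T x ↔ u ∈ T ∧ (u = x ∨ G.Adj x u) :=
  mem_filter

theorem closedNbhdIn_subset {T : Finset V} {x : V} : closedNbhdIn G T x ⊆ T :=
  filter_subset _ T

theorem card_closedNbhdIn {T : Finset V} {x : V} (hx : x ∈ T) :
    #(closedNbhdIn G T x) = degIn G T x + 1 := by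
  rw [closedNbhdIn, filter_or, filter_eq', if_pos hx, ← insert_eq,
    card_insert_of_notMem (by simp), degIn]

variable [Fintype V]

theorem degIn_add_card_neighborFinset_sdiff_le_maxDegree {T C : Finset V} (hTC : T ⊆ C)
    (x : V) : degIn G T x + #(G.neighborFinset x \ C) ≤ G.maxDegree := by
  have hsub : T.filter (G.Adj x) ⊆ G.neighborFinset x ∩ C := fun y hy =>
    mem_inter.2 ⟨(G.mem_neighborFinset x y).2 (mem_filter.1 hy).2, hTC (mem_filter.1 hy).1⟩
  calc degIn G T x + #(G.neighborFinset x \ C)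
      ≤ #(G.neighborFinset x ∩ C) + #(G.neighborFinset x \ C) :=
        Nat.add_le_add_right (card_le_card hsub) _
    _ = G.degree x := by rw [card_inter_add_card_sdiff, card_neighborFinset_eq_degree]
    _ ≤ G.maxDegree := G.degree_le_maxDegree x

theorem degIn_le_maxDegree (T : Finset V) (x : V) : degIn G T x ≤ G.maxDegree :=
  Nat.le_of_add_right_le (degIn_add_card_neighborFinset_sdiff_le_maxDegree G Subset.rfl x)

theorem mem_closedNbhdFinset {A : Finset V} {w : V} :
    w ∈ closedNbhdFinset G A ↔ w ∈ A ∨ ∃ u ∈ A, G.Adj u w := by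
  simp [closedNbhdFinset]

theorem coe_closedNbhdFinset (A : Finset V) : ↑(closedNbhdFinset G A) = closedNbhd G ↑A := by
  ext w
  simp [mem_closedNbhdFinset, closedNbhd]

end DegIn

def centers [DecidableEq V] (ℓ : ℕ) (v : ℕ → V) : Finset V :=
  (range ℓ).image fun i => v (i + 1)

theorem mem_centers [DecidableEq V] {ℓ : ℕ} {v : ℕ → V} {w : V} :
    w ∈ centers ℓ v ↔ ∃ i < ℓ, v (i + 1) = w := by
  simp [centers]

theorem card_centers_le [DecidableEq V] (ℓ : ℕ) (v : ℕ → V) : #(centers ℓ v) ≤ ℓ :=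
  card_image_le.trans (card_range ℓ).le

/-- `S = S₀ ⊋ S₁ ⊋ ⋯ ⊋ S_ℓ = ∅` with `S_{i+1} = S_i \ N_{S_i}[v_{i+1}]`, where `v_{i+1}` has
minimum degree in `G[S_i]`. -/
structure IsGreedyPeeling [DecidableEq V] (G : SimpleGraph V) [DecidableRel G.Adj] (S : Finset V)
    (ℓ : ℕ) (v : ℕ → V) (Ss : ℕ → Finset V) : Prop where
  start : Ss 0 = S
  mem : ∀ i < ℓ, v (i + 1) ∈ Ss i
  degIn_le : ∀ i < ℓ, ∀ u ∈ Ss i, degIn G (Ss i) (v (i + 1)) ≤ degIn G (Ss i) u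
  step : ∀ i < ℓ, Ss (i + 1) = Ss i \ closedNbhdIn G (Ss i) (v (i + 1))
  last : Ss ℓ = ∅

namespace IsGreedyPeeling

variable [DecidableEq V] {G : SimpleGraph V} [DecidableRel G.Adj] {S : Finset V} {ℓ : ℕ}
  {v : ℕ → V} {Ss : ℕ → Finset V}

theorem subset_start (hg : IsGreedyPeeling G S ℓ v Ss) {i : ℕ} (hi : i ≤ ℓ) : Ss i ⊆ S :=
  hg.start ▸ subset_of_sdiff_chain hg.step (Nat.zero_le i) hi

theorem card_eq (hg : IsGreedyPeeling G S ℓ v Ss) :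
    #S = ℓ + ∑ i ∈ range ℓ, degIn G (Ss i) (v (i + 1)) := by
  have := card_eq_sum_card_add_of_sdiff_chain (fun i _ => closedNbhdIn_subset G) hg.step
  rw [hg.start, hg.last, card_empty, add_zero,
    sum_congr rfl fun i hi => card_closedNbhdIn G (hg.mem i (mem_range.1 hi))] at this
  rw [this, sum_add_distrib, sum_const, card_range, smul_eq_mul, mul_one, add_comm]

theorem exists_mem_closedNbhdIn (hg : IsGreedyPeeling G S ℓ v Ss) {u : V} (hu : u ∈ S) :
    ∃ i < ℓ, u ∈ closedNbhdIn G (Ss i) (v (i + 1)) := by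
  have := subset_biUnion_union_of_sdiff_chain hg.step (hg.start ▸ hu)
  rw [hg.last, union_empty, mem_biUnion] at this
  obtain ⟨i, hi, hu⟩ := this
  exact ⟨i, mem_range.1 hi, hu⟩

theorem notMem_closedNbhdIn (hg : IsGreedyPeeling G S ℓ v Ss) {i j : ℕ} (hij : i < j)
    (hj : j < ℓ) : v (j + 1) ∉ closedNbhdIn G (Ss i) (v (i + 1)) := by
  have := subset_of_sdiff_chain hg.step hij hj.le (hg.mem j hj)
  rw [hg.step i (hij.trans hj)] at this
  exact (mem_sdiff.1 this).2

theorem isIndep_centers (hg : IsGreedyPeeling G S ℓ v Ss) : IsIndep G ↑(centers ℓ v) := by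
  have key : ∀ i j, i < j → j < ℓ → ¬ G.Adj (v (i + 1)) (v (j + 1)) := fun i j hij hj hadj =>
    hg.notMem_closedNbhdIn hij hj
      ((mem_closedNbhdIn G).2
        ⟨subset_of_sdiff_chain hg.step hij.le hj.le (hg.mem j hj), Or.inr hadj⟩)
  rintro _ hx _ hy hne
  obtain ⟨i, hi, rfl⟩ := mem_centers.1 hx
  obtain ⟨j, hj, rfl⟩ := mem_centers.1 hy
  rcases lt_trichotomy i j with h | rfl | h
  · exact key i j h hj
  · exact absurd rfl hne
  · exact fun hadj => key j i h hi hadj.symm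

variable [Fintype V]

theorem subset_closedNbhdFinset (hg : IsGreedyPeeling G S ℓ v Ss) :
    S ⊆ closedNbhdFinset G (centers ℓ v) := fun u hu => by
  obtain ⟨i, hi, hu⟩ := hg.exists_mem_closedNbhdIn hu
  have hc : v (i + 1) ∈ centers ℓ v := mem_centers.2 ⟨i, hi, rfl⟩
  rcases ((mem_closedNbhdIn G).1 hu).2 with rfl | hadj
  · exact (mem_closedNbhdFinset G).2 (Or.inl hc)
  · exact (mem_closedNbhdFinset G).2 (Or.inr ⟨_, hc, hadj⟩)

theorem card_neighborFinset_sdiff_le (hg : IsGreedyPeeling G S ℓ v Ss) {i : ℕ} (hi : i < ℓ)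
    {u : V} (hu : u ∈ Ss i) :
    #(G.neighborFinset u \ closedNbhdFinset G (centers ℓ v)) ≤
      G.maxDegree - degIn G (Ss i) (v (i + 1)) := by
  have := degIn_add_card_neighborFinset_sdiff_le_maxDegree G
    ((hg.subset_start hi.le).trans hg.subset_closedNbhdFinset) u
  have := hg.degIn_le i hi u hu
  omega

/-- Outside `N[{v₁, …, v_ℓ}]`, each of the `dᵢ` non-centre vertices of the `i`-th block has at most
`Δ - dᵢ` neighbours, since at least `dᵢ` of its neighbours lie in `Sᵢ ⊆ S`. -/
theorem card_biUnion_neighborFinset_sdiff_le (hg : IsGreedyPeeling G S ℓ v Ss) :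
    #(S.biUnion (G.neighborFinset ·) \ closedNbhdFinset G (centers ℓ v)) ≤
      ∑ i ∈ range ℓ,
        degIn G (Ss i) (v (i + 1)) * (G.maxDegree - degIn G (Ss i) (v (i + 1))) := by
  set C := closedNbhdFinset G (centers ℓ v)
  have hsub : S.biUnion (G.neighborFinset ·) \ C ⊆ (range ℓ).biUnion fun i =>
      ((closedNbhdIn G (Ss i) (v (i + 1))).erase (v (i + 1))).biUnion fun u =>
        G.neighborFinset u \ C := fun w hw => by
    obtain ⟨hwN, hwC⟩ := mem_sdiff.1 hw
    obtain ⟨u, huS, huw⟩ := mem_biUnion.1 hwN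
    obtain ⟨i, hi, hui⟩ := hg.exists_mem_closedNbhdIn huS
    have hu : u ≠ v (i + 1) := by
      rintro rfl
      exact hwC ((mem_closedNbhdFinset G).2 (Or.inr ⟨_, mem_centers.2 ⟨i, hi, rfl⟩,
        (G.mem_neighborFinset _ _).1 huw⟩))
    exact mem_biUnion.2 ⟨i, mem_range.2 hi, mem_biUnion.2 ⟨u, mem_erase.2 ⟨hu, hui⟩,
      mem_sdiff.2 ⟨huw, hwC⟩⟩⟩
  refine (card_le_card hsub).trans (card_biUnion_le.trans (sum_le_sum fun i hi => ?_))
  have hi := mem_range.1 hi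
  have hv := hg.mem i hi
  calc _ ≤ ∑ u ∈ (closedNbhdIn G (Ss i) (v (i + 1))).erase (v (i + 1)),
        (G.maxDegree - degIn G (Ss i) (v (i + 1))) :=
      card_biUnion_le.trans (sum_le_sum fun u hu =>
        hg.card_neighborFinset_sdiff_le hi (closedNbhdIn_subset G (mem_erase.1 hu).2))
    _ = _ := by
      rw [sum_const, smul_eq_mul, card_erase_of_mem ((mem_closedNbhdIn G).2 ⟨hv, Or.inl rfl⟩),
        card_closedNbhdIn G hv, Nat.add_sub_cancel]

/-- The centres together with a maximal independent subset of the rest of `N(S)` form an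
independent set whose closed neighbourhood contains `N[S]`. -/
theorem iota'_le (hg : IsGreedyPeeling G S ℓ v Ss) {k : ℕ} (hS : IsIsolating G k ↑S) :
    iota' G k ≤
      ℓ + ∑ i ∈ range ℓ,
        degIn G (Ss i) (v (i + 1)) * (G.maxDegree - degIn G (Ss i) (v (i + 1))) := by
  set C := closedNbhdFinset G (centers ℓ v)
  set U := S.biUnion (G.neighborFinset ·) \ C
  obtain ⟨M, hMU, hM, hMdom⟩ := exists_isIndep_subset_dominating G U
  have hMC : ∀ m ∈ M, m ∉ C := fun m hm => (mem_sdiff.1 (hMU hm)).2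
  have hind : IsIndep G ↑(centers ℓ v ∪ M) := by
    rw [coe_union]
    exact isIndep_union G hg.isIndep_centers hM fun a ha m hm hadj =>
      hMC m hm ((mem_closedNbhdFinset G).2 (Or.inr ⟨a, ha, hadj⟩))
  have hcover : closedNbhd G ↑S ⊆ closedNbhd G ↑(centers ℓ v ∪ M) := by
    intro w hw
    by_cases hwC : w ∈ C
    · rw [← mem_coe, coe_closedNbhdFinset] at hwC
      exact closedNbhd_mono G (by simp) hwC
    · obtain ⟨u, hu, huw⟩ : ∃ u ∈ S, G.Adj u w := hw.resolve_left fun hwS =>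
        hwC (hg.subset_closedNbhdFinset hwS)
      have hwU : w ∈ U :=
        mem_sdiff.2 ⟨mem_biUnion.2 ⟨u, hu, (G.mem_neighborFinset _ _).2 huw⟩, hwC⟩
      rcases hMdom w hwU with hwM | ⟨m, hm, hmw⟩
      · exact Or.inl (by simp [hwM])
      · exact Or.inr ⟨m, by simp [hm], hmw⟩
  calc iota' G k ≤ #(centers ℓ v ∪ M) :=
        iota'_le_card G (hS.of_closedNbhd_subset G hcover) hind
    _ ≤ #(centers ℓ v) + #U :=
        (card_union_le _ _).trans (Nat.add_le_add_left (card_le_card hMU) _)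
    _ ≤ _ := Nat.add_le_add (card_centers_le ℓ v) hg.card_biUnion_neighborFinset_sdiff_le

end IsGreedyPeeling

theorem stmt_2_general [Fintype V] [DecidableEq V] (G : SimpleGraph V) [DecidableRel G.Adj]
    (k : ℕ)
    (S : Finset V) (hiso : IsIsolating G k ↑S) (hmin : S.card = iota G k)
    (ℓ : ℕ) (v : ℕ → V) (Ss : ℕ → Finset V)
    (h0 : Ss 0 = S)
    (hvmem : ∀ i < ℓ, v (i + 1) ∈ Ss i)
    (hvmin : ∀ i < ℓ, ∀ u ∈ Ss i, degIn G (Ss i) (v (i + 1)) ≤ degIn G (Ss i) u)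
    (hstep : ∀ i < ℓ, Ss (i + 1) =
      Ss i \ ((Ss i).filter fun u => u = v (i + 1) ∨ G.Adj (v (i + 1)) u))
    (hend : Ss ℓ = ∅) :
    (iota' G k : ℝ) ≤ -(iota G k : ℝ) ^ 2 / ℓ
      + (iota G k : ℝ) * ((G.maxDegree : ℝ) + 2) - (ℓ : ℝ) * (G.maxDegree : ℝ) := by
  have hg : IsGreedyPeeling G S ℓ v Ss := ⟨h0, hvmem, hvmin, hstep, hend⟩
  set d : ℕ → ℕ := fun i => degIn G (Ss i) (v (i + 1))
  have hι : (iota G k : ℝ) = ℓ + ∑ i ∈ range ℓ, (d i : ℝ) := by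
    rw [← hmin, hg.card_eq]
    push_cast
    rfl
  have hι' : (iota' G k : ℝ) ≤ ℓ + ∑ i ∈ range ℓ, (d i : ℝ) * (G.maxDegree - d i) := by
    have hcast : ∀ i, ((G.maxDegree - d i : ℕ) : ℝ) = G.maxDegree - d i := fun i =>
      Nat.cast_sub (degIn_le_maxDegree G _ _)
    calc (iota' G k : ℝ) ≤ ((ℓ + ∑ i ∈ range ℓ, d i * (G.maxDegree - d i) : ℕ) : ℝ) :=
          Nat.cast_le.2 (hg.iota'_le hiso)
      _ = _ := by simp only [Nat.cast_add, Nat.cast_sum, Nat.cast_mul, hcast]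
  have hCS := card_add_sum_mul_sub_le (range ℓ) (fun i => (d i : ℝ)) G.maxDegree
  rw [card_range] at hCS
  rw [hι]
  exact hι'.trans hCS

/-- Main theorem: greedy decomposition of a minimum K_k-isolating set into ℓ closed
neighborhoods gives ι'_k(G) ≤ −ι_k(G)²/ℓ + ι_k(G)(Δ + 2) − ℓΔ. -/
theorem stmt_2 [Fintype V] [DecidableEq V] (G : SimpleGraph V) [DecidableRel G.Adj]
    (k : ℕ) (hk : 0 < k)
    (S : Finset V) (hiso : IsIsolating G k ↑S) (hmin : S.card = iota G k)
    (ℓ : ℕ) (v : ℕ → V) (Ss : ℕ → Finset V)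
    (h0 : Ss 0 = S)
    (hvmem : ∀ i < ℓ, v (i + 1) ∈ Ss i)
    (hvmin : ∀ i < ℓ, ∀ u ∈ Ss i, degIn G (Ss i) (v (i + 1)) ≤ degIn G (Ss i) u)
    (hstep : ∀ i < ℓ, Ss (i + 1) =
      Ss i \ ((Ss i).filter fun u => u = v (i + 1) ∨ G.Adj (v (i + 1)) u))
    (hend : Ss ℓ = ∅) :
    (iota' G k : ℝ) ≤ -(iota G k : ℝ) ^ 2 / ℓ
      + (iota G k : ℝ) * ((G.maxDegree : ℝ) + 2) - (ℓ : ℝ) * (G.maxDegree : ℝ) :=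
  stmt_2_general G k S hiso hmin ℓ v Ss h0 hvmem hvmin hstep hend
end

section
/- For every finite simple graph G with maximum degree Δ ≥ 1 and every positive integer k, ι'_k(G) ≤ (Δ − 2√Δ + 2)·ι_k(G). -/
open SimpleGraph

variable {V : Type*}

lemma mem_closedNbhd_iff' {G : SimpleGraph V} {S : Set V} {v : V} :
    v ∈ closedNbhd G S ↔ v ∈ S ∨ ∃ u ∈ S, G.Adj u v := Iff.rfl

/-- The key algebraic inequality: `1 + q(Δ-q) ≤ (Δ - 2√Δ + 2)(1+q)`. -/
lemma magic_ineq (Δ q : ℝ) (hΔ : 0 ≤ Δ) :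
    1 + q * (Δ - q) ≤ (Δ - 2 * Real.sqrt Δ + 2) * (1 + q) := by
  have hs : Real.sqrt Δ * Real.sqrt Δ = Δ := Real.mul_self_sqrt hΔ
  nlinarith [sq_nonneg (q - Real.sqrt Δ + 1)]

/-- Every finite set of vertices has a maximal independent subset. -/
lemma exists_maximal_indep [DecidableEq V] (G : SimpleGraph V) [DecidableRel G.Adj]
    (U : Finset V) :
    ∃ J : Finset V, J ⊆ U ∧ (∀ a ∈ J, ∀ b ∈ J, a ≠ b → ¬ G.Adj a b) ∧
      (∀ u ∈ U, u ∈ J ∨ ∃ j ∈ J, G.Adj j u) := by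
  obtain ⟨J, hJmem, hmax⟩ := Finset.exists_max_image
    (U.powerset.filter (fun J => ∀ a ∈ J, ∀ b ∈ J, a ≠ b → ¬ G.Adj a b))
    (fun J => J.card) ⟨∅, by simp⟩
  obtain ⟨hJpow, hJind⟩ := Finset.mem_filter.mp hJmem
  have hJU : J ⊆ U := Finset.mem_powerset.mp hJpow
  refine ⟨J, hJU, hJind, ?_⟩
  intro u hu
  by_contra h
  push_neg at h
  obtain ⟨huJ, hnoadj⟩ := h
  have hins : insert u J ∈ U.powerset.filter
      (fun J => ∀ a ∈ J, ∀ b ∈ J, a ≠ b → ¬ G.Adj a b) := by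
    refine Finset.mem_filter.mpr ⟨Finset.mem_powerset.mpr (Finset.insert_subset hu hJU), ?_⟩
    intro a ha b hb hab
    rcases Finset.mem_insert.mp ha with rfl | haJ
    · rcases Finset.mem_insert.mp hb with rfl | hbJ
      · exact absurd rfl hab
      · exact fun hadj => hnoadj b hbJ hadj.symm
    · rcases Finset.mem_insert.mp hb with rfl | hbJ
      · exact fun hadj => hnoadj a haJ hadj
      · exact hJind a haJ b hbJ hab
  have := hmax _ hins
  rw [Finset.card_insert_of_notMem huJ] at this
  omega

/-- The greedy (min-degree) lemma: every finite vertex set `D` contains an independent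
subset `A` dominating `D`, with `|A| + Σ_{v ∈ D\A} (Δ - deg_D v) ≤ (Δ - 2√Δ + 2)|D|`. -/
lemma claimC [DecidableEq V] (G : SimpleGraph V) [DecidableRel G.Adj] (Δ : ℝ) (hΔ0 : 0 ≤ Δ) :
    ∀ (n : ℕ) (D : Finset V), D.card ≤ n → ∃ A : Finset V, A ⊆ D ∧
      (∀ a ∈ A, ∀ b ∈ A, a ≠ b → ¬ G.Adj a b) ∧
      (∀ u ∈ D, u ∉ A → ∃ a ∈ A, G.Adj a u) ∧
      ((A.card : ℝ) + ∑ u ∈ D \ A, (Δ - (degIn G D u : ℝ))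
        ≤ (Δ - 2 * Real.sqrt Δ + 2) * D.card) := by
  intro n
  induction n with
  | zero =>
    intro D hD
    have hDe : D = ∅ := Finset.card_eq_zero.mp (Nat.le_zero.mp hD)
    subst hDe
    exact ⟨∅, by simp, by simp, by simp, by simp⟩
  | succ n ihn =>
    intro D hD
    rcases D.eq_empty_or_nonempty with rfl | hne
    · exact ⟨∅, by simp, by simp, by simp, by simp⟩
    obtain ⟨v, hvD, hmin⟩ := Finset.exists_min_image D (fun u => degIn G D u) hne
    set Nv := D.filter (fun u => G.Adj v u) with hNvdef
    have hvNv : v ∉ Nv := by simp [hNvdef]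
    have hNvD : Nv ⊆ D := Finset.filter_subset _ _
    set D' := (D \ Nv).erase v with hD'def
    have hD'D : D' ⊆ D := (Finset.erase_subset _ _).trans Finset.sdiff_subset
    have hvD' : v ∉ D' := Finset.notMem_erase _ _
    have hD'Nv : Disjoint D' Nv := by
      rw [Finset.disjoint_left]
      intro u hu
      exact (Finset.mem_sdiff.mp (Finset.mem_of_mem_erase hu)).2
    have hadj' : ∀ u ∈ D', ¬ G.Adj v u := by
      intro u hu hadj
      exact (Finset.mem_sdiff.mp (Finset.mem_of_mem_erase hu)).2
        (Finset.mem_filter.mpr ⟨(Finset.mem_sdiff.mp (Finset.mem_of_mem_erase hu)).1, hadj⟩)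
    have hDeq : D = insert v (D' ∪ Nv) := by
      ext u
      simp only [Finset.mem_insert, Finset.mem_union]
      constructor
      · intro hu
        by_cases h1 : u = v
        · exact Or.inl h1
        by_cases h2 : G.Adj v u
        · exact Or.inr (Or.inr (Finset.mem_filter.mpr ⟨hu, h2⟩))
        · exact Or.inr (Or.inl (Finset.mem_erase.mpr ⟨h1,
            Finset.mem_sdiff.mpr ⟨hu, fun hm => h2 (Finset.mem_filter.mp hm).2⟩⟩))
      · rintro (rfl | h | h)
        · exact hvD
        · exact hD'D h
        · exact hNvD h
    have hvnotun : v ∉ D' ∪ Nv := by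
      simp only [Finset.mem_union]
      exact fun h => h.elim hvD' hvNv
    have hcardN : D.card = D'.card + Nv.card + 1 := by
      rw [hDeq, Finset.card_insert_of_notMem hvnotun, Finset.card_union_of_disjoint hD'Nv]
    have hD'lt : D'.card ≤ n := by omega
    obtain ⟨A', hA'D', hA'ind, hA'dom, hA'ineq⟩ := ihn D' hD'lt
    have hvA' : v ∉ A' := fun h => hvD' (hA'D' h)
    refine ⟨insert v A', ?_, ?_, ?_, ?_⟩
    · exact Finset.insert_subset hvD (hA'D'.trans hD'D)
    · intro a ha b hb hab
      rcases Finset.mem_insert.mp ha with rfl | haA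
      · rcases Finset.mem_insert.mp hb with rfl | hbA
        · exact absurd rfl hab
        · exact hadj' b (hA'D' hbA)
      · rcases Finset.mem_insert.mp hb with rfl | hbA
        · exact fun hadj => hadj' a (hA'D' haA) hadj.symm
        · exact hA'ind a haA b hbA hab
    · intro u hu huA
      have hunv : u ≠ v := fun h => huA (h ▸ Finset.mem_insert_self v A')
      have := hDeq ▸ hu
      rcases Finset.mem_insert.mp this with h | h
      · exact absurd h hunv
      rcases Finset.mem_union.mp h with h | h
      · have huA' : u ∉ A' := fun hm => huA (Finset.mem_insert_of_mem hm)
        obtain ⟨a, haA', hadj⟩ := hA'dom u h huA'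
        exact ⟨a, Finset.mem_insert_of_mem haA', hadj⟩
      · exact ⟨v, Finset.mem_insert_self v A', (Finset.mem_filter.mp h).2⟩
    · -- the cardinality inequality
      have hq : degIn G D v = Nv.card := rfl
      have hDA : D \ insert v A' = (D' \ A') ∪ Nv := by
        ext u
        simp only [Finset.mem_sdiff, Finset.mem_union, Finset.mem_insert, not_or]
        constructor
        · rintro ⟨hu, h1, h2⟩
          by_cases hm : u ∈ Nv
          · exact Or.inr hm
          · exact Or.inl ⟨Finset.mem_erase.mpr ⟨h1, Finset.mem_sdiff.mpr ⟨hu, hm⟩⟩, h2⟩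
        · rintro (⟨h1, h2⟩ | h)
          · exact ⟨hD'D h1, fun he => hvD' (he ▸ h1), h2⟩
          · refine ⟨hNvD h, fun he => hvNv (he ▸ h), fun hm => ?_⟩
            exact (Finset.disjoint_left.mp hD'Nv (hA'D' hm)) h
      have hdisj2 : Disjoint (D' \ A') Nv := hD'Nv.mono_left Finset.sdiff_subset
      have hsplit : ∑ u ∈ D \ insert v A', (Δ - (degIn G D u : ℝ))
          = ∑ u ∈ D' \ A', (Δ - (degIn G D u : ℝ)) + ∑ u ∈ Nv, (Δ - (degIn G D u : ℝ)) := by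
        rw [hDA, Finset.sum_union hdisj2]
      have b1 : ∑ u ∈ D' \ A', (Δ - (degIn G D u : ℝ))
          ≤ ∑ u ∈ D' \ A', (Δ - (degIn G D' u : ℝ)) := by
        refine Finset.sum_le_sum fun u hu => ?_
        have h1 : degIn G D' u ≤ degIn G D u :=
          Finset.card_le_card (Finset.filter_subset_filter _ hD'D)
        have h2 : (degIn G D' u : ℝ) ≤ (degIn G D u : ℝ) := Nat.cast_le.mpr h1
        linarith
      have b2 : ∑ u ∈ Nv, (Δ - (degIn G D u : ℝ)) ≤ (Nv.card : ℝ) * (Δ - (Nv.card : ℝ)) := by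
        have h1 : ∀ u ∈ Nv, (Δ - (degIn G D u : ℝ)) ≤ Δ - (Nv.card : ℝ) := by
          intro u hu
          have h2 : Nv.card ≤ degIn G D u := hq ▸ hmin u (hNvD hu)
          have h3 : ((Nv.card : ℕ) : ℝ) ≤ (degIn G D u : ℝ) := Nat.cast_le.mpr h2
          linarith
        calc ∑ u ∈ Nv, (Δ - (degIn G D u : ℝ)) ≤ Nv.card • (Δ - (Nv.card : ℝ)) :=
              Finset.sum_le_card_nsmul _ _ _ h1
          _ = (Nv.card : ℝ) * (Δ - (Nv.card : ℝ)) := nsmul_eq_mul _ _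
      have hmg := magic_ineq Δ (Nv.card : ℝ) hΔ0
      have hAcard : ((insert v A').card : ℝ) = (A'.card : ℝ) + 1 := by
        rw [Finset.card_insert_of_notMem hvA']
        push_cast
        ring
      have hcast : (D.card : ℝ) = (D'.card : ℝ) + (Nv.card : ℝ) + 1 := by
        exact_mod_cast hcardN
      have hdist : (Δ - 2 * Real.sqrt Δ + 2) * ((D'.card : ℝ) + (Nv.card : ℝ) + 1)
          = (Δ - 2 * Real.sqrt Δ + 2) * (D'.card : ℝ)
            + (Δ - 2 * Real.sqrt Δ + 2) * (1 + (Nv.card : ℝ)) := by ring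
      rw [hsplit, hAcard, hcast, hdist]
      linarith [hA'ineq, b1, b2, hmg]

/-- ι'_k(G) ≤ (Δ − 2√Δ + 2)·ι_k(G). -/
theorem stmt_3 [Fintype V] (G : SimpleGraph V) [DecidableRel G.Adj]
    (k : ℕ) (hk : 0 < k) (hΔ : 1 ≤ G.maxDegree) :
    (iota' G k : ℝ) ≤ ((G.maxDegree : ℝ) - 2 * Real.sqrt (G.maxDegree) + 2) * (iota G k : ℝ) := by
  classical
  -- the whole vertex set is isolating
  have hisoU : IsIsolating G k (↑(Finset.univ : Finset V) : Set V) := by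
    intro T hT _ hTk
    have hTne : T.Nonempty := Finset.card_pos.mp (by omega)
    obtain ⟨t, ht⟩ := hTne
    have hmem : t ∈ (↑T : Set V) ∩ closedNbhd G (↑(Finset.univ : Finset V) : Set V) :=
      ⟨Finset.mem_coe.mpr ht, Or.inl (Finset.mem_coe.mpr (Finset.mem_univ t))⟩
    rw [hT] at hmem
    exact hmem
  have hne : {n | ∃ S : Finset V, S.card = n ∧ IsIsolating G k ↑S}.Nonempty :=
    ⟨_, Finset.univ, rfl, hisoU⟩
  obtain ⟨D, hDcard, hDiso⟩ := Nat.sInf_mem hne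
  obtain ⟨A, hAD, hAind, hAdom, hAineq⟩ :=
    claimC G ((G.maxDegree : ℝ)) (by positivity) D.card D le_rfl
  set U : Finset V := Finset.univ.filter
    (fun u => u ∈ closedNbhd G (↑D : Set V) ∧ u ∉ closedNbhd G (↑A : Set V)) with hUdef
  obtain ⟨J, hJU, hJind, hJdom⟩ := exists_maximal_indep G U
  have hJfact : ∀ j ∈ J, j ∈ closedNbhd G (↑D : Set V) ∧ j ∉ closedNbhd G (↑A : Set V) :=
    fun j hj => (Finset.mem_filter.mp (hJU hj)).2
  -- the union A ∪ J is independent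
  have hIind : IsIndep G (↑(A ∪ J) : Set V) := by
    intro a ha b hb hab
    have ha' := Finset.mem_union.mp (Finset.mem_coe.mp ha)
    have hb' := Finset.mem_union.mp (Finset.mem_coe.mp hb)
    rcases ha' with haA | haJ
    · rcases hb' with hbA | hbJ
      · exact hAind a haA b hbA hab
      · exact fun hadj => (hJfact b hbJ).2 (Or.inr ⟨a, Finset.mem_coe.mpr haA, hadj⟩)
    · rcases hb' with hbA | hbJ
      · exact fun hadj => (hJfact a haJ).2 (Or.inr ⟨b, Finset.mem_coe.mpr hbA, hadj.symm⟩)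
      · exact hJind a haJ b hbJ hab
  -- the union A ∪ J is isolating
  have hIiso : IsIsolating G k (↑(A ∪ J) : Set V) := by
    intro T hT hclique
    refine hDiso T ?_ hclique
    rw [Set.eq_empty_iff_forall_notMem]
    rintro u ⟨huT, huD⟩
    have huI : u ∈ closedNbhd G (↑(A ∪ J) : Set V) := by
      by_cases hA : u ∈ closedNbhd G (↑A : Set V)
      · rcases hA with h | ⟨a, haA, hadj⟩
        · exact Or.inl (Finset.mem_coe.mpr (Finset.mem_union_left _ (Finset.mem_coe.mp h)))
        · exact Or.inr ⟨a, Finset.mem_coe.mpr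
            (Finset.mem_union_left _ (Finset.mem_coe.mp haA)), hadj⟩
      · have huU : u ∈ U := Finset.mem_filter.mpr ⟨Finset.mem_univ _, huD, hA⟩
        rcases hJdom u huU with h | ⟨j, hjJ, hadj⟩
        · exact Or.inl (Finset.mem_coe.mpr (Finset.mem_union_right _ h))
        · exact Or.inr ⟨j, Finset.mem_coe.mpr (Finset.mem_union_right _ hjJ), hadj⟩
    exact (Set.eq_empty_iff_forall_notMem.mp hT) u ⟨huT, huI⟩
  -- counting J
  have hJsub : J ⊆ (D \ A).biUnion (fun v => G.neighborFinset v \ D) := by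
    intro j hj
    obtain ⟨hjD, hjA⟩ := hJfact j hj
    have hjnotD : j ∉ D := by
      intro hjDmem
      have hjnotA : j ∉ A := fun h => hjA (Or.inl (Finset.mem_coe.mpr h))
      obtain ⟨a, haA, hadj⟩ := hAdom j hjDmem hjnotA
      exact hjA (Or.inr ⟨a, Finset.mem_coe.mpr haA, hadj⟩)
    rcases hjD with h | ⟨v, hvD, hadj⟩
    · exact absurd (Finset.mem_coe.mp h) hjnotD
    · have hvD2 : v ∈ D := Finset.mem_coe.mp hvD
      have hvA : v ∉ A := fun h => hjA (Or.inr ⟨v, Finset.mem_coe.mpr h, hadj⟩)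
      exact Finset.mem_biUnion.mpr ⟨v, Finset.mem_sdiff.mpr ⟨hvD2, hvA⟩,
        Finset.mem_sdiff.mpr ⟨(SimpleGraph.mem_neighborFinset G v j).mpr hadj, hjnotD⟩⟩
  have hJcard : (J.card : ℝ) ≤ ∑ v ∈ D \ A, ((G.maxDegree : ℝ) - (degIn G D v : ℝ)) := by
    have h1 : J.card ≤ ∑ v ∈ D \ A, (G.neighborFinset v \ D).card :=
      (Finset.card_le_card hJsub).trans Finset.card_biUnion_le
    have h2 : ∀ v ∈ D \ A, ((G.neighborFinset v \ D).card : ℝ)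
        ≤ (G.maxDegree : ℝ) - (degIn G D v : ℝ) := by
      intro v hv
      have e1 : (G.neighborFinset v \ D).card + (G.neighborFinset v ∩ D).card
          = (G.neighborFinset v).card := Finset.card_sdiff_add_card_inter _ _
      have e2 : G.neighborFinset v ∩ D = D.filter (G.Adj v) := by
        ext u
        simp only [Finset.mem_inter, Finset.mem_filter, SimpleGraph.mem_neighborFinset]
        tauto
      have e4 : (G.neighborFinset v \ D).card + degIn G D v = (G.neighborFinset v).card := by
        rw [degIn, ← e2]; exact e1
      have e3 : (G.neighborFinset v).card ≤ G.maxDegree := G.degree_le_maxDegree v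
      have e4' : ((G.neighborFinset v \ D).card : ℝ) + (degIn G D v : ℝ)
          = ((G.neighborFinset v).card : ℝ) := by exact_mod_cast e4
      have e3' : ((G.neighborFinset v).card : ℝ) ≤ (G.maxDegree : ℝ) := Nat.cast_le.mpr e3
      linarith
    calc (J.card : ℝ) ≤ ∑ v ∈ D \ A, ((G.neighborFinset v \ D).card : ℝ) := by
          exact_mod_cast h1
      _ ≤ _ := Finset.sum_le_sum h2
  have hiota' : iota' G k ≤ (A ∪ J).card :=
    Nat.sInf_le ⟨A ∪ J, rfl, hIiso, hIind⟩
  have hcardU : ((A ∪ J).card : ℝ) ≤ (A.card : ℝ) + (J.card : ℝ) := by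
    exact_mod_cast Finset.card_union_le A J
  calc (iota' G k : ℝ) ≤ ((A ∪ J).card : ℝ) := Nat.cast_le.mpr hiota'
    _ ≤ (A.card : ℝ) + (J.card : ℝ) := hcardU
    _ ≤ (A.card : ℝ) + ∑ v ∈ D \ A, ((G.maxDegree : ℝ) - (degIn G D v : ℝ)) := by
        linarith
    _ ≤ ((G.maxDegree : ℝ) - 2 * Real.sqrt (G.maxDegree) + 2) * (D.card : ℝ) := hAineq
    _ = ((G.maxDegree : ℝ) - 2 * Real.sqrt (G.maxDegree) + 2) * (iota G k : ℝ) := by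
        rw [hDcard]; rfl
end

section
/- Let s, t, k be positive integers with s + t − 1 ≥ k, and let G(t,s) be the graph consisting of a clique on vertices x_1,...,x_t, together with st disjoint copies K^{i,i'}_k of K_k (1 ≤ i ≤ t, 1 ≤ i' ≤ s), where each x_i is joined to exactly one vertex y_{i,i'} of each K^{i,i'}_k. Then ι_k(G(t,s)) = t. -/
open SimpleGraph

variable {V : Type*}

/-- Vertices of `G(t,s)`: `inl i` is the clique vertex `xᵢ`; `inr (i, i', j)` is the `j`-th
vertex of the copy `K^{i,i'}_k`, with `y_{i,i'}` being the one with `j = 0`. -/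
abbrev GtsVertex (t s k : ℕ) := Fin t ⊕ Fin t × Fin s × Fin k

/-- The graph `G(t,s)`: a clique on `x₁,…,x_t` and `s·t` disjoint copies of `K_k`, with
`xᵢ` joined to the vertex `y_{i,i'}` (index `0`) of each copy `K^{i,i'}_k`. -/
def GraphGts (t s k : ℕ) : SimpleGraph (GtsVertex t s k) where
  Adj a b := match a, b with
    | Sum.inl i, Sum.inl j => i ≠ j
    | Sum.inl i, Sum.inr (a, _, c) => a = i ∧ (c : ℕ) = 0
    | Sum.inr (a, _, c), Sum.inl i => a = i ∧ (c : ℕ) = 0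
    | Sum.inr (a, b, c), Sum.inr (a', b', c') => a = a' ∧ b = b' ∧ c ≠ c'
  symm := by
    constructor
    rintro (i | ⟨a, b, c⟩) (j | ⟨a', b', c'⟩) h
    · exact h.symm
    · exact h
    · exact h
    · exact ⟨h.1.symm, h.2.1.symm, h.2.2.symm⟩
  loopless := by
    constructor
    rintro (i | ⟨a, b, c⟩) h
    · exact h rfl
    · exact h.2.2 rfl

instance (t s k : ℕ) : DecidableRel (GraphGts t s k).Adj := fun a b =>
  match a, b with
  | Sum.inl i, Sum.inl j => inferInstanceAs (Decidable (i ≠ j))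
  | Sum.inl i, Sum.inr (a, _, c) => inferInstanceAs (Decidable (a = i ∧ (c : ℕ) = 0))
  | Sum.inr (a, _, c), Sum.inl i => inferInstanceAs (Decidable (a = i ∧ (c : ℕ) = 0))
  | Sum.inr (a, b, c), Sum.inr (a', b', c') =>
      inferInstanceAs (Decidable (a = a' ∧ b = b' ∧ c ≠ c'))

/-!
The clique vertices `x₁, …, x_t` isolate every `K_k`: a clique outside their closed
neighbourhood lies inside one copy `K^{i,i'}_k` and misses its attachment vertex `y_{i,i'}`,
so it has at most `k - 1` vertices. Conversely, an isolating set must meet the closed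
neighbourhood of each copy `K^{i,1}_k`, and these `t` closed neighbourhoods are pairwise
disjoint, being contained in the `t` blocks `{xᵢ} ∪ ⋃_{i'} K^{i,i'}_k`.
-/

open Finset

variable {G : SimpleGraph V} {k : ℕ}

lemma iota_le_card [Fintype V] {S : Finset V} (hS : IsIsolating G k ↑S) :
    iota G k ≤ S.card :=
  Nat.sInf_le ⟨S, rfl, hS⟩

lemma le_iota [Fintype V] {n : ℕ} (hex : ∃ S : Finset V, IsIsolating G k ↑S)
    (hle : ∀ S : Finset V, IsIsolating G k ↑S → n ≤ S.card) : n ≤ iota G k := by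
  obtain ⟨S, hS⟩ := hex
  exact le_csInf ⟨_, S, rfl, hS⟩ fun m ⟨S, hSm, hS⟩ => hSm ▸ hle S hS

lemma IsIsolating.exists_mem_closedNbhd {S : Set V} (hS : IsIsolating G k S) {T : Finset V}
    (hT : G.IsNClique k ↑T) : ∃ u ∈ S, u ∈ closedNbhd G ↑T := by
  by_contra! hnot
  refine hS T ?_ hT.isClique hT.card_eq
  ext v
  simp only [Set.mem_inter_iff, Finset.mem_coe, Set.mem_empty_iff_false, iff_false, not_and]
  rintro hvT (hvS | ⟨u, huS, huv⟩)
  · exact hnot v hvS (Or.inl hvT)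
  · exact hnot u huS (Or.inr ⟨v, hvT, huv.symm⟩)

lemma IsIsolating.card_le_card {ι : Type*} [Fintype ι] (f : V → ι) (T : ι → Finset V)
    (hT : ∀ i, G.IsNClique k ↑(T i)) (hf : ∀ i, ∀ v ∈ closedNbhd G ↑(T i), f v = i)
    {S : Finset V} (hS : IsIsolating G k ↑S) : Fintype.card ι ≤ S.card := by
  refine Finset.card_le_card_of_surjOn f fun i _ => ?_
  obtain ⟨u, huS, huT⟩ := hS.exists_mem_closedNbhd (hT i)
  exact ⟨u, huS, hf i u huT⟩

namespace GraphGts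

variable {t s : ℕ}

/-- The clique vertices `x₁, …, x_t`. -/
def centers (t s k : ℕ) : Finset (GtsVertex t s k) :=
  univ.map Function.Embedding.inl

/-- The copy `K^{i,b}_k`. -/
def copy (k : ℕ) (i : Fin t) (b : Fin s) : Finset (GtsVertex t s k) :=
  univ.map ⟨fun j => Sum.inr (i, b, j), fun _ _ h => by simpa using h⟩

/-- The index `i` of the block `{xᵢ} ∪ ⋃_{i'} K^{i,i'}_k` containing a vertex. -/
def block : GtsVertex t s k → Fin t :=
  Sum.elim id Prod.fst

lemma card_centers : (centers t s k).card = t := by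
  simp [centers]

lemma exists_eq_inr_of_not_mem_closedNbhd {v : GtsVertex t s k}
    (hv : v ∉ closedNbhd (GraphGts t s k) ↑(centers t s k)) :
    ∃ a b c, v = Sum.inr (a, b, c) ∧ (c : ℕ) ≠ 0 := by
  rcases v with i | ⟨a, b, c⟩
  · exact absurd (Or.inl (by simp [centers])) hv
  · exact ⟨a, b, c, rfl, fun hc => hv (Or.inr ⟨Sum.inl a, by simp [centers], rfl, hc⟩)⟩

lemma isIsolating_centers (hk : 0 < k) :
    IsIsolating (GraphGts t s k) k ↑(centers t s k) := by
  intro T hdisj hT hcard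
  have hout : ∀ v ∈ T, v ∉ closedNbhd (GraphGts t s k) ↑(centers t s k) :=
    fun v hvT hvN => (Set.eq_empty_iff_forall_notMem.mp hdisj) v ⟨hvT, hvN⟩
  let index : GtsVertex t s k → ℕ := Sum.elim (fun _ => 0) fun p => p.2.2
  -- Outside `N[centers]` a clique lives in one copy and avoids its vertex `y` of index `0`.
  have hmaps : Set.MapsTo index ↑T ↑(Finset.Ioo 0 k) := by
    intro v hv
    obtain ⟨a, b, c, rfl, hc⟩ := exists_eq_inr_of_not_mem_closedNbhd (hout v hv)
    simp [index, Nat.pos_of_ne_zero hc]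
  have hinj : Set.InjOn index ↑T := by
    intro v hv w hw hvw
    by_contra hne
    obtain ⟨a, b, c, rfl, -⟩ := exists_eq_inr_of_not_mem_closedNbhd (hout v hv)
    obtain ⟨a', b', c', rfl, -⟩ := exists_eq_inr_of_not_mem_closedNbhd (hout w hw)
    exact (hT hv hw hne).2.2 (Fin.ext hvw)
  have := Finset.card_le_card_of_injOn index hmaps hinj
  simp only [Nat.card_Ioo] at this
  omega

lemma isNClique_copy (i : Fin t) (b : Fin s) : (GraphGts t s k).IsNClique k ↑(copy k i b) := by
  refine ⟨?_, by simp [copy]⟩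
  simp only [copy, coe_map, coe_univ, Set.image_univ]
  rintro _ ⟨j, rfl⟩ _ ⟨j', rfl⟩ hne
  exact ⟨rfl, rfl, fun h => hne (h ▸ rfl)⟩

lemma block_eq_of_mem_closedNbhd_copy {i : Fin t} {b : Fin s} {v : GtsVertex t s k}
    (hv : v ∈ closedNbhd (GraphGts t s k) ↑(copy k i b)) : block v = i := by
  simp only [closedNbhd, copy, coe_map, coe_univ, Set.image_univ, Set.mem_range,
    exists_exists_eq_and, Set.mem_ofPred_eq] at hv
  rcases hv with ⟨j, rfl⟩ | ⟨j, huv⟩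
  · rfl
  · rcases v with i' | ⟨a, b', c⟩
    · exact huv.1.symm
    · exact huv.1.symm

end GraphGts

open GraphGts

theorem stmt_12_general (t s k : ℕ) (hs : 0 < s) (hk : 0 < k) :
    iota (GraphGts t s k) k = t := by
  refine le_antisymm ((iota_le_card (isIsolating_centers hk)).trans_eq card_centers) ?_
  refine le_iota ⟨_, isIsolating_centers hk⟩ fun S hS => ?_
  simpa using hS.card_le_card block (fun i => copy k i ⟨0, hs⟩) (fun i => isNClique_copy i _)
    fun i _ => block_eq_of_mem_closedNbhd_copy

/-- ι_k(G(t,s)) = t. -/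
theorem stmt_12 (t s k : ℕ) (ht : 0 < t) (hs : 0 < s) (hk : 0 < k)
    (h : s + t - 1 ≥ k) :
    iota (GraphGts t s k) k = t :=
  stmt_12_general t s k hs hk
end

section
/- For every positive integer t with t² ≥ k, the graph G = G(t, t² − t + 1) satisfies Δ(G) = t², ι_k(G) = t, and ι'_k(G) = t³ − 2t² + 2t; consequently ι'_k(G)/ι_k(G) = Δ(G) − 2√(Δ(G)) + 2, showing the ratio bound ι'_k/ι_k ≤ Δ − 2√Δ + 2 is sharp whenever Δ is a perfect square. -/
open SimpleGraph

variable {V : Type*}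

/-!
Each copy `K^{i,i'}_k` is a `k`-clique, so a `K_k`-isolating set `S` contains `xᵢ` or a vertex
of that copy; if `S` contains `m` of the `xᵢ`, this forces `|S| ≥ m + (t - m) s`. Conversely `S`
is isolating as soon as `N[S]` contains every `xᵢ` and every attachment vertex `y_{i,i'}`: what
is left are cliques inside copies that miss `y_{i,i'}`, with at most `k - 1` vertices. Hence
`ι_k = t`, attained by `{x₁, …, x_t}`, while an independent set contains at most one `xᵢ`, so
`ι'_k = 1 + (t - 1) s`, attained by `x₁` together with all `y_{i,i'}` for `i ≠ 1`. For
`s = t² - t + 1` this gives `Δ = t - 1 + s = t²` and `ι'_k = t³ - 2t² + 2t`.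
-/

open Finset

namespace GraphGts

variable {t s k : ℕ}

@[simp] lemma adj_inl_inl {i j : Fin t} :
    (GraphGts t s k).Adj (.inl i) (.inl j) ↔ i ≠ j := Iff.rfl

@[simp] lemma adj_inl_inr {i a : Fin t} {b : Fin s} {c : Fin k} :
    (GraphGts t s k).Adj (.inl i) (.inr (a, b, c)) ↔ a = i ∧ (c : ℕ) = 0 := Iff.rfl

@[simp] lemma adj_inr_inl {i a : Fin t} {b : Fin s} {c : Fin k} :
    (GraphGts t s k).Adj (.inr (a, b, c)) (.inl i) ↔ a = i ∧ (c : ℕ) = 0 := Iff.rfl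

@[simp] lemma adj_inr_inr {a a' : Fin t} {b b' : Fin s} {c c' : Fin k} :
    (GraphGts t s k).Adj (.inr (a, b, c)) (.inr (a', b', c')) ↔ a = a' ∧ b = b' ∧ c ≠ c' :=
  Iff.rfl

lemma isIsolating_of_mem_closedNbhd [NeZero k] {S : Set (GtsVertex t s k)}
    (hx : ∀ i, .inl i ∈ closedNbhd (GraphGts t s k) S)
    (hy : ∀ i i', .inr (i, i', 0) ∈ closedNbhd (GraphGts t s k) S) :
    IsIsolating (GraphGts t s k) k S := by
  intro T hT hclique hcard
  have hout : ∀ v ∈ T, v ∉ closedNbhd (GraphGts t s k) S := fun v hv hN =>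
    Set.eq_empty_iff_forall_notMem.mp hT v ⟨hv, hN⟩
  have hcopy : ∀ v ∈ T, ∃ p : Fin t × Fin s × Fin k, v = .inr p ∧ p.2.2 ≠ 0 := by
    rintro (i | ⟨a, b, c⟩) hv
    · exact absurd (hx i) (hout _ hv)
    · refine ⟨(a, b, c), rfl, ?_⟩
      rintro rfl
      exact hout _ hv (hy a b)
  let level : GtsVertex t s k → Fin k := Sum.elim (fun _ => 0) (·.2.2)
  have hle : #T ≤ #(univ.erase (0 : Fin k)) := by
    refine card_le_card_of_injOn level (fun v hv => ?_) (fun u hu w hw huw => ?_)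
    · obtain ⟨p, rfl, hp⟩ := hcopy v hv
      simpa [level] using hp
    · by_contra hne
      obtain ⟨p, rfl, -⟩ := hcopy u hu
      obtain ⟨q, rfl, -⟩ := hcopy w hw
      exact (hclique hu hw hne).2.2 huw
  rw [card_erase_of_mem (mem_univ _), card_univ, Fintype.card_fin] at hle
  have := NeZero.pos k
  omega

lemma mem_or_exists_mem_of_isIsolating {S : Finset (GtsVertex t s k)}
    (hS : IsIsolating (GraphGts t s k) k S) (i : Fin t) (i' : Fin s) :
    .inl i ∈ S ∨ ∃ c, .inr (i, i', c) ∈ S := by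
  by_contra! hS'
  let copy : Finset (GtsVertex t s k) :=
    univ.map ⟨fun c => .inr (i, i', c), fun c c' h => by simpa using h⟩
  refine hS copy ?_ ?_ (by simp [copy])
  · refine Set.eq_empty_iff_forall_notMem.mpr ?_
    rintro _ ⟨hv, hN | ⟨u, hu, huv⟩⟩ <;> simp only [copy, coe_map, Set.mem_image] at hv <;>
      obtain ⟨c, -, rfl⟩ := hv
    · exact hS'.2 c hN
    · rcases u with j | ⟨a, b, c'⟩
      · obtain ⟨rfl, -⟩ := huv.symm
        exact hS'.1 hu
      · obtain ⟨rfl, rfl, -⟩ := huv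
        exact hS'.2 c' hu
  · intro u hu w hw hne
    simp only [copy, coe_map, Set.mem_image] at hu hw
    obtain ⟨⟨c, -, rfl⟩, ⟨c', -, rfl⟩⟩ := And.intro hu hw
    exact ⟨rfl, rfl, fun h => hne (h ▸ rfl)⟩

lemma card_toLeft_add_sub_mul_le_card {S : Finset (GtsVertex t s k)}
    (hS : IsIsolating (GraphGts t s k) k S) :
    #S.toLeft + (t - #S.toLeft) * s ≤ #S := by
  have hcover : S.toLeftᶜ ×ˢ (univ : Finset (Fin s)) ⊆
      S.toRight.image fun p => (p.1, p.2.1) := by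
    rintro ⟨i, i'⟩ h
    rw [mem_product, mem_compl, mem_toLeft] at h
    obtain hi | ⟨c, hc⟩ := mem_or_exists_mem_of_isIsolating hS i i'
    · exact absurd hi h.1
    · exact mem_image.mpr ⟨(i, i', c), mem_toRight.mpr hc, rfl⟩
  calc #S.toLeft + (t - #S.toLeft) * s
        = #S.toLeft + #(S.toLeftᶜ ×ˢ (univ : Finset (Fin s))) := by simp [card_compl]
    _ ≤ #S.toLeft + #S.toRight := by grw [card_le_card hcover, card_image_le]
    _ = #S := card_toLeft_add_card_toRight

lemma card_toLeft_le_one_of_isIndep {S : Finset (GtsVertex t s k)}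
    (hS : IsIndep (GraphGts t s k) S) : #S.toLeft ≤ 1 :=
  card_le_one.mpr fun i hi j hj => by
    by_contra hij
    exact hS (mem_toLeft.mp hi) (mem_toLeft.mp hj) (by simpa using hij) hij

lemma iota_eq [NeZero k] (hs : 0 < s) : iota (GraphGts t s k) k = t := by
  refine IsLeast.csInf_eq ⟨⟨univ.disjSum ∅, by simp, ?_⟩, ?_⟩
  · refine isIsolating_of_mem_closedNbhd (fun i => .inl (by simp)) fun i i' => ?_
    exact .inr ⟨.inl i, by simp, by simp⟩
  · rintro _ ⟨S, rfl, hS⟩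
    have hS' := card_toLeft_add_sub_mul_le_card hS
    have hleft : #S.toLeft ≤ t := card_le_univ _ |>.trans_eq (Fintype.card_fin t)
    have := Nat.le_mul_of_pos_right (t - #S.toLeft) hs
    omega

lemma iota'_eq [NeZero k] (ht : 0 < t) (hs : 0 < s) :
    iota' (GraphGts t s k) k = 1 + (t - 1) * s := by
  obtain ⟨i₀⟩ : Nonempty (Fin t) := ⟨⟨0, ht⟩⟩
  let S : Finset (GtsVertex t s k) :=
    ({i₀} : Finset (Fin t)).disjSum ((univ.erase i₀) ×ˢ univ ×ˢ {0})
  refine IsLeast.csInf_eq ⟨⟨S, by simp [S, card_erase_of_mem], ?_, ?_⟩, ?_⟩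
  · refine isIsolating_of_mem_closedNbhd (fun i => ?_) fun i i' => ?_
    · by_cases hi : i = i₀
      · exact .inl (by simp [S, hi])
      · exact .inr ⟨.inl i₀, by simp [S], by simpa [eq_comm] using hi⟩
    · by_cases hi : i = i₀
      · exact .inr ⟨.inl i₀, by simp [S], by simp [hi]⟩
      · exact .inl (by simp [S, hi])
  · rintro (u | ⟨a, b, c⟩) hu (w | ⟨a', b', c'⟩) hw hne <;> simp_all [S]
  · rintro _ ⟨S, rfl, hiso, hind⟩
    have hS' := card_toLeft_add_sub_mul_le_card hiso
    have hleft := card_toLeft_le_one_of_isIndep hind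
    obtain ⟨n, rfl⟩ := Nat.exists_eq_add_one.mpr ht
    interval_cases #S.toLeft <;> simp only [Nat.sub_zero, add_tsub_cancel_right] at hS' ⊢ <;>
      linarith

lemma degree_inl [NeZero k] (i : Fin t) : (GraphGts t s k).degree (.inl i) = t - 1 + s := by
  have hN : (GraphGts t s k).neighborFinset (.inl i) =
      (univ.erase i).disjSum ({i} ×ˢ univ ×ˢ {0}) := by
    ext (j | ⟨a, b, c⟩)
    · simp [ne_comm]
    · simp only [mem_neighborFinset, adj_inl_inr, Fin.val_eq_zero_iff, inr_mem_disjSum,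
        mem_product, mem_singleton, mem_univ, true_and]
  rw [← card_neighborFinset_eq_degree, hN]
  simp [card_erase_of_mem]

lemma degree_inr_le (p : Fin t × Fin s × Fin k) : (GraphGts t s k).degree (.inr p) ≤ k := by
  obtain ⟨a, b, c⟩ := p
  have hN : (GraphGts t s k).neighborFinset (.inr (a, b, c)) ⊆
      ({a} : Finset (Fin t)).disjSum ({a} ×ˢ {b} ×ˢ univ.erase c) := by
    rintro (j | ⟨a', b', c'⟩) h <;> simp_all [eq_comm]
  rw [← card_neighborFinset_eq_degree]
  grw [card_le_card hN]
  simp only [card_disjSum, card_product, card_singleton, card_erase_of_mem (mem_univ c), card_univ,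
    Fintype.card_fin]
  have := c.pos
  omega

lemma maxDegree_eq [NeZero k] (ht : 0 < t) (hk : k ≤ t - 1 + s) :
    (GraphGts t s k).maxDegree = t - 1 + s := by
  refine le_antisymm (maxDegree_le_of_forall_degree_le _ _ ?_) ?_
  · rintro (i | p)
    · exact (degree_inl i).le
    · exact (degree_inr_le p).trans hk
  · exact degree_inl (s := s) (k := k) ⟨0, ht⟩ ▸ degree_le_maxDegree _ _

end GraphGts

open GraphGts in
/-- For G = G(t, t² − t + 1): Δ(G) = t², ι_k(G) = t, ι'_k(G) = t³ − 2t² + 2t, and the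
ratio ι'_k/ι_k equals Δ − 2√Δ + 2, so the bound is sharp for square Δ. -/
theorem stmt_14 (t k : ℕ) (ht : 0 < t) (hk : 0 < k) (h : t ^ 2 ≥ k) :
    (GraphGts t (t ^ 2 - t + 1) k).maxDegree = t ^ 2 ∧
    iota (GraphGts t (t ^ 2 - t + 1) k) k = t ∧
    (iota' (GraphGts t (t ^ 2 - t + 1) k) k : ℤ) = t ^ 3 - 2 * t ^ 2 + 2 * t ∧
    (iota' (GraphGts t (t ^ 2 - t + 1) k) k : ℝ) / (iota (GraphGts t (t ^ 2 - t + 1) k) k : ℝ)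
      = ((GraphGts t (t ^ 2 - t + 1) k).maxDegree : ℝ)
        - 2 * Real.sqrt ((GraphGts t (t ^ 2 - t + 1) k).maxDegree : ℝ) + 2 := by
  have : NeZero k := ⟨hk.ne'⟩
  have hs : 0 < t ^ 2 - t + 1 := Nat.succ_pos _
  have hsq : t ≤ t ^ 2 := Nat.le_self_pow two_ne_zero t
  have hΔ : t - 1 + (t ^ 2 - t + 1) = t ^ 2 := by omega
  have hmax : (GraphGts t (t ^ 2 - t + 1) k).maxDegree = t ^ 2 :=
    (maxDegree_eq ht (hΔ.symm ▸ h)).trans hΔ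
  have hι' : (iota' (GraphGts t (t ^ 2 - t + 1) k) k : ℤ) = t ^ 3 - 2 * t ^ 2 + 2 * t := by
    rw [iota'_eq ht hs]
    push_cast [Nat.cast_sub hsq, Nat.cast_sub ht]
    ring
  refine ⟨hmax, iota_eq hs, hι', ?_⟩
  have hι'R : (iota' (GraphGts t (t ^ 2 - t + 1) k) k : ℝ) = (t : ℝ) ^ 3 - 2 * t ^ 2 + 2 * t :=
    mod_cast hι'
  rw [hmax, iota_eq hs, hι'R, Nat.cast_pow, Real.sqrt_sq (Nat.cast_nonneg t)]
  field_simp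
end

section
/- Let G be a K_{1,r}-free graph (r ≥ 3), let v be a vertex having at least one neighbor in an independent set I not containing v, and let A be a set of vertices disjoint from N[I]. Then any independent subset of N(v) ∩ A has size at most r − 2. -/
open SimpleGraph

variable {V : Type*}

/-- In a K_{1,r}-free graph, if v has a neighbor in an independent set I (v ∉ I) and A is
disjoint from N[I], then any independent subset of N(v) ∩ A has at most r − 2 vertices. -/
theorem stmt_17 [Fintype V] (G : SimpleGraph V) (r : ℕ) (hr : 3 ≤ r)
    (hfree : K1rFree G r)
    (I : Set V) (hI : IsIndep G I) (v : V) (hv : v ∉ I) (hvI : ∃ w ∈ I, G.Adj v w)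
    (A : Set V) (hA : A ∩ closedNbhd G I = ∅)
    (B : Finset V) (hB : (↑B : Set V) ⊆ {u | G.Adj v u} ∩ A) (hBind : IsIndep G ↑B) :
    B.card ≤ r - 2 := by
  by_contra hcard
  push_neg at hcard
  have hle : r - 1 ≤ B.card := by omega
  haveI : NeZero r := ⟨by omega⟩
  obtain ⟨w, hwI, hvw⟩ := hvI
  -- build f : Fin (r-1) → V injective into B
  set f : Fin (r - 1) → V := fun i => (B.equivFin.symm ⟨i, lt_of_lt_of_le i.2 hle⟩ : V) with hf
  have finj : Function.Injective f := by
    intro i j hij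
    have := B.equivFin.symm.injective (Subtype.ext hij)
    simpa [Fin.ext_iff] using congrArg Fin.val this
  have fB : ∀ i, f i ∈ B := fun i => (B.equivFin.symm _).2
  have fadj : ∀ i, G.Adj v (f i) := fun i => ((hB (fB i)).1 : _)
  have fA : ∀ i, f i ∈ A := fun i => (hB (fB i)).2
  have hnotN : ∀ a ∈ A, a ∉ closedNbhd G I := by
    intro a ha hcn
    have : a ∈ A ∩ closedNbhd G I := ⟨ha, hcn⟩
    simp [hA] at this
  have fnI : ∀ i, f i ∉ I := fun i h => hnotN _ (fA i) (Or.inl h)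
  have fnw : ∀ i, ¬ G.Adj w (f i) := fun i h => hnotN _ (fA i) (Or.inr ⟨w, hwI, h⟩)
  have fnw' : ∀ i, ¬ G.Adj (f i) w := fun i h => fnw i h.symm
  have fne : ∀ i, f i ≠ w := fun i h => fnI i (h ▸ hwI)
  -- index shift
  set p : Fin r → Fin (r - 1) := fun j => ⟨j.val - 1, by have := j.2; omega⟩ with hp
  have pinj : ∀ j k : Fin r, j ≠ 0 → k ≠ 0 → p j = p k → j = k := by
    intro j k hj hk hjk
    have hj' : (j : ℕ) ≠ 0 := fun hz => hj (Fin.ext hz)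
    have hk' : (k : ℕ) ≠ 0 := fun hz => hk (Fin.ext hz)
    have := congrArg Fin.val hjk
    simp [hp] at this
    exact Fin.ext (by omega)
  -- the map for the embedding
  set g : Fin 1 ⊕ Fin r → V := fun x =>
    Sum.elim (fun _ => v)
      (fun j => if h : j = (0 : Fin r) then w else f (p j)) x with hg
  have hgv : ∀ a : Fin 1, g (Sum.inl a) = v := fun _ => rfl
  have key : ∀ j : Fin r, g (Sum.inr j) = w ∨ ∃ i, g (Sum.inr j) = f i := by
    intro j
    by_cases h : j = 0
    · left; simp [hg, h]
    · right; exact ⟨p j, by simp [hg, h]⟩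
  have hadjvr : ∀ j : Fin r, G.Adj v (g (Sum.inr j)) := by
    intro j
    rcases key j with h | ⟨i, h⟩ <;> rw [h]
    · exact hvw
    · exact fadj i
  have hnadjrr : ∀ j k : Fin r, ¬ G.Adj (g (Sum.inr j)) (g (Sum.inr k)) := by
    intro j k hadj
    by_cases hj : j = 0 <;> by_cases hk : k = 0
    · simp [hg, hj, hk] at hadj
    · simp [hg, hj, hk] at hadj; exact fnw _ hadj
    · simp [hg, hj, hk] at hadj; exact fnw' _ hadj
    · simp [hg, hj, hk] at hadj
      by_cases hjk : p j = p k
      · rw [hjk] at hadj; exact G.irrefl hadj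
      · exact hBind (fB _) (fB _) (fun h => hjk (finj h)) hadj
  have ginj : Function.Injective g := by
    intro x y hxy
    match x, y with
    | Sum.inl a, Sum.inl b => simp [Subsingleton.elim a b]
    | Sum.inl a, Sum.inr j =>
      exfalso
      have := hadjvr j
      rw [← hxy] at this
      exact G.irrefl this
    | Sum.inr j, Sum.inl a =>
      exfalso
      have := hadjvr j
      rw [hxy] at this
      exact G.irrefl this
    | Sum.inr j, Sum.inr k =>
      congr 1
      by_cases hj : j = 0 <;> by_cases hk : k = 0
      · rw [hj, hk]
      · exfalso; simp [hg, hj, hk] at hxy; exact fne _ hxy.symm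
      · exfalso; simp [hg, hj, hk] at hxy; exact fne _ hxy
      · simp [hg, hj, hk] at hxy
        exact pinj j k hj hk (finj hxy)
  exact hfree.false
    ⟨⟨g, ginj⟩, by
      intro x y
      match x, y with
      | Sum.inl a, Sum.inl b =>
        exact iff_of_false (fun h => G.irrefl h) (by simp [completeBipartiteGraph])
      | Sum.inl a, Sum.inr j =>
        exact iff_of_true (hadjvr j) (by simp [completeBipartiteGraph])
      | Sum.inr j, Sum.inl a =>
        exact iff_of_true ((hadjvr j).symm) (by simp [completeBipartiteGraph])
      | Sum.inr j, Sum.inr k =>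
        exact iff_of_false (hnadjrr j k) (by simp [completeBipartiteGraph])⟩
end
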